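/- Let M be a unital C*-algebra and e ∈ M a partial isometry. Then the set F_e = {x ∈ B_M : x e* = e e*} is a (nonempty, convex) face of the closed unit ball B_M: if x, y ∈ B_M, 0 < t < 1, and t x + (1−t) y ∈ F_e, then x, y ∈ F_e. -/

import Mathlib

/-!
Write `p = e e*`, a projection. For a contraction `x` put `r = x e* - p`. Since `x* x ≤ 1` gives
`e x* x e* ≤ p`, expanding `r* r` yields `0 ≤ r* r ≤ D x` for the defect
`D x = 2p - (p x e* + (p x e*)*)`. The defect is affine, nonnegative on the unit ball and zero on
`F_e`; so if a proper convex combination of two contractions lies in `F_e`, both have defect `0`,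
hence `r = 0` for both.
-/

open Metric

section PartialIsometry

variable {A : Type*}

lemma isStarProjection_mul_star_self_of_mul_star_mul_self [Semigroup A] [StarMul A] {e : A}
    (he : e * star e * e = e) : IsStarProjection (e * star e) where
  isIdempotentElem := by rw [IsIdempotentElem, ← mul_assoc, he]
  isSelfAdjoint := IsSelfAdjoint.mul_star_self e

lemma norm_le_one_of_mul_star_mul_self [NonUnitalNormedRing A] [StarRing A] [CStarRing A] {e : A}
    (he : e * star e * e = e) : ‖e‖ ≤ 1 := by
  have h := (isStarProjection_mul_star_self_of_mul_star_mul_self he).norm_le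
  rw [CStarRing.norm_self_mul_star] at h
  nlinarith [norm_nonneg e]

end PartialIsometry

lemma convex_setOf_norm_le_one_and_mul_eq {A : Type*} [NormedRing A] [NormedAlgebra ℝ A]
    (a b : A) : Convex ℝ {x : A | ‖x‖ ≤ 1 ∧ x * a = b} := by
  simpa [Set.inter_def] using (convex_closedBall (0 : A) 1).inter
    ((convex_singleton b).linear_preimage (LinearMap.mulRight ℝ a))

section FaceDefect

variable {A : Type*} [NonUnitalRing A] [StarRing A]

def faceDefect (e x : A) : A :=
  2 • (e * star e) - (e * star e * x * star e + star (e * star e * x * star e))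

lemma faceDefect_smul_add_smul [Module ℝ A] [IsScalarTower ℝ A A] [SMulCommClass ℝ A A]
    [StarModule ℝ A] (e x y : A) {t s : ℝ} (hts : t + s = 1) :
    faceDefect e (t • x + s • y) = t • faceDefect e x + s • faceDefect e y := by
  simp only [faceDefect, mul_add, add_mul, mul_smul_comm, smul_mul_assoc, star_add, star_smul,
    star_trivial]
  linear_combination (norm := module) hts.symm • (2 • (e * star e))

lemma faceDefect_eq_zero {e z : A} (he : e * star e * e = e) (hz : z * star e = e * star e) :
    faceDefect e z = 0 := by
  rw [faceDefect, mul_assoc _ z, hz,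
    (isStarProjection_mul_star_self_of_mul_star_mul_self he).isIdempotentElem.eq,
    (IsSelfAdjoint.mul_star_self e).star_eq, two_nsmul, sub_self]

end FaceDefect

namespace CStarAlgebra

variable {A : Type*} [CStarAlgebra A] [PartialOrder A] [StarOrderedRing A]

lemma star_mul_self_le_one_of_norm_le_one {x : A} (hx : ‖x‖ ≤ 1) : star x * x ≤ 1 := by
  rw [← norm_le_one_iff_of_nonneg _ (star_mul_self_nonneg x), CStarRing.norm_star_mul_self]
  nlinarith [norm_nonneg x]

variable {e : A} (he : e * star e * e = e)
include he

lemma star_mul_self_le_faceDefect {x : A} (hx : ‖x‖ ≤ 1) :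
    star (x * star e - e * star e) * (x * star e - e * star e) ≤ faceDefect e x := by
  have hconj : e * (star x * x) * star e ≤ e * star e := by
    simpa using star_left_conjugate_le_conjugate (star_mul_self_le_one_of_norm_le_one hx) (star e)
  have hexpand : faceDefect e x - star (x * star e - e * star e) * (x * star e - e * star e) =
      (e * star e - e * (star x * x) * star e) - (e * star e * (e * star e) - e * star e) := by
    simp only [faceDefect, star_sub, star_mul, star_star]
    noncomm_ring
  rw [(isStarProjection_mul_star_self_of_mul_star_mul_self he).isIdempotentElem.eq, sub_self,
    sub_zero] at hexpand
  rw [← sub_nonneg, hexpand]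
  exact sub_nonneg.2 hconj

lemma faceDefect_nonneg {x : A} (hx : ‖x‖ ≤ 1) : 0 ≤ faceDefect e x :=
  (star_mul_self_nonneg _).trans (star_mul_self_le_faceDefect he hx)

lemma mul_star_eq_of_faceDefect_eq_zero {x : A} (hx : ‖x‖ ≤ 1) (hD : faceDefect e x = 0) :
    x * star e = e * star e := by
  have h := star_mul_self_le_faceDefect he hx
  rw [hD] at h
  rw [← sub_eq_zero, ← CStarRing.star_mul_self_eq_zero_iff]
  exact le_antisymm h (star_mul_self_nonneg _)

lemma mul_star_eq_of_smul_add_smul_mul_star_eq {x y : A} (hx : ‖x‖ ≤ 1) (hy : ‖y‖ ≤ 1)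
    {t s : ℝ} (ht : 0 < t) (hs : 0 < s) (hts : t + s = 1)
    (hz : (t • x + s • y) * star e = e * star e) : x * star e = e * star e := by
  have h := faceDefect_eq_zero he hz
  rw [faceDefect_smul_add_smul e x y hts, add_eq_zero_iff_of_nonneg
    (smul_nonneg ht.le (faceDefect_nonneg he hx)) (smul_nonneg hs.le (faceDefect_nonneg he hy)),
    smul_eq_zero] at h
  exact mul_star_eq_of_faceDefect_eq_zero he hx (h.1.resolve_left ht.ne')

end CStarAlgebra

/-- For a partial isometry `e` in a unital C*-algebra, the set
`F_e = {x ∈ B_M : x e* = e e*}` is a nonempty convex face of the closed unit ball. -/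
theorem face_of_partial_isometry {M : Type*} [CStarAlgebra M]
    (e : M) (he : e * star e * e = e) :
    e ∈ {x : M | ‖x‖ ≤ 1 ∧ x * star e = e * star e} ∧
    Convex ℝ {x : M | ‖x‖ ≤ 1 ∧ x * star e = e * star e} ∧
    (∀ x y : M, ‖x‖ ≤ 1 → ‖y‖ ≤ 1 → ∀ t : ℝ, 0 < t → t < 1 →
      t • x + (1 - t) • y ∈ {x : M | ‖x‖ ≤ 1 ∧ x * star e = e * star e} →
      x ∈ {x : M | ‖x‖ ≤ 1 ∧ x * star e = e * star e} ∧
        y ∈ {x : M | ‖x‖ ≤ 1 ∧ x * star e = e * star e}) := by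
  let := CStarAlgebra.spectralOrder M
  have := CStarAlgebra.spectralOrderedRing M
  refine ⟨⟨norm_le_one_of_mul_star_mul_self he, rfl⟩,
    convex_setOf_norm_le_one_and_mul_eq _ _, ?_⟩
  rintro x y hx hy t ht0 ht1 ⟨-, hz⟩
  have hz' : ((1 - t) • y + t • x) * star e = e * star e := by rwa [add_comm]
  exact ⟨⟨hx, CStarAlgebra.mul_star_eq_of_smul_add_smul_mul_star_eq he hx hy ht0 (sub_pos.2 ht1)
      (by ring) hz⟩,
    ⟨hy, CStarAlgebra.mul_star_eq_of_smul_add_smul_mul_star_eq he hy hx (sub_pos.2 ht1) ht0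
      (by ring) hz'⟩⟩
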